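/- arXiv:math/0510417 — 3 statements merged into one kernel-verified Lean document; each statement's English description precedes it below -/
import Mathlib

section
/- Let x₋ < x₊ be real numbers with x₊·x₋ < (x₊ + x₋) − 1 and x₊ + x₋ ≥ 1, and let (aₙ)ₙ≥₀ satisfy aₙ₊₁ = (x₊ + x₋)·aₙ − x₊·x₋·aₙ₋₁ for all n ≥ 1, with initial terms satisfying 0 < a₀ ≤ a₁. Then the sequence (aₙ) is strictly increasing from index 1 on: aₙ₊₁ > aₙ for all n ≥ 1. -/
/-! With `s = x₊ + x₋` and `p = x₊ x₋`, the increment is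
`aₙ₊₂ - aₙ₊₁ = (s - 1) aₙ₊₁ - p aₙ`. As long as `0 < aₙ ≤ aₙ₊₁`, this is positive: for `p ≥ 0` it is
at least `(s - 1 - p) aₙ₊₁ > 0`, and for `p < 0` both terms are nonnegative and the second is
positive. So `0 < aₙ ≤ aₙ₊₁` propagates by induction, and each step is then strict. -/

theorem lt_mul_sub_mul_of_le {s p u v : ℝ} (hps : p < s - 1) (hs : 1 ≤ s) (hu : 0 < u)
    (huv : u ≤ v) : v < s * v - p * u := by
  rcases le_or_gt 0 p with hp | hp
  · nlinarith [mul_le_mul_of_nonneg_left huv hp]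
  · nlinarith [mul_neg_of_neg_of_pos hp hu]

section LinearRecurrence

variable {s p : ℝ} {a : ℕ → ℝ}

theorem pos_and_le_succ_of_linear_recurrence
    (hrec : ∀ n, a (n + 2) = s * a (n + 1) - p * a n) (hps : p < s - 1) (hs : 1 ≤ s)
    (h0 : 0 < a 0) (h01 : a 0 ≤ a 1) : ∀ n, 0 < a n ∧ a n ≤ a (n + 1)
  | 0 => ⟨h0, h01⟩
  | n + 1 =>
    have ⟨hpos, hle⟩ := pos_and_le_succ_of_linear_recurrence hrec hps hs h0 h01 n
    ⟨hpos.trans_le hle, (hrec n ▸ lt_mul_sub_mul_of_le hps hs hpos hle).le⟩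

theorem succ_lt_succ_succ_of_linear_recurrence
    (hrec : ∀ n, a (n + 2) = s * a (n + 1) - p * a n) (hps : p < s - 1) (hs : 1 ≤ s)
    (h0 : 0 < a 0) (h01 : a 0 ≤ a 1) (n : ℕ) : a (n + 1) < a (n + 2) := by
  obtain ⟨hpos, hle⟩ := pos_and_le_succ_of_linear_recurrence hrec hps hs h0 h01 n
  exact hrec n ▸ lt_mul_sub_mul_of_le hps hs hpos hle

end LinearRecurrence

theorem stmt_3_general (xm xp : ℝ)
    (h1 : xp * xm < (xp + xm) - 1) (h2 : xp + xm ≥ 1)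
    (aseq : ℕ → ℝ)
    (hrec : ∀ n : ℕ, aseq (n + 2) = (xp + xm) * aseq (n + 1) - xp * xm * aseq n)
    (h0 : 0 < aseq 0) (h01 : aseq 0 ≤ aseq 1) :
    ∀ n : ℕ, 1 ≤ n → aseq n < aseq (n + 1) := by
  intro n hn
  obtain ⟨m, rfl⟩ := Nat.exists_eq_add_of_le' hn
  exact succ_lt_succ_succ_of_linear_recurrence hrec h1 h2 h0 h01 m

theorem stmt_3 (xm xp : ℝ) (hlt : xm < xp)
    (h1 : xp * xm < (xp + xm) - 1) (h2 : xp + xm ≥ 1)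
    (aseq : ℕ → ℝ)
    (hrec : ∀ n : ℕ, aseq (n + 2) = (xp + xm) * aseq (n + 1) - xp * xm * aseq n)
    (h0 : 0 < aseq 0) (h01 : aseq 0 ≤ aseq 1) :
    ∀ n : ℕ, 1 ≤ n → aseq n < aseq (n + 1) :=
  stmt_3_general xm xp h1 h2 aseq hrec h0 h01
end

section
/- Let (aₖ) be the sequence defined by a₀ = 1, a₁ = 5, aₖ₊₁ = 6aₖ − aₖ₋₁, and let (dₖ) be the sequence defined by d₀ = 1, d₁ = 7, dₖ₊₁ = 6dₖ − dₖ₋₁. Then for all k ≥ 0, 2·aₖ² − 1 = dₖ². -/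
/-!
Both sequences solve `u (k + 2) = 6 u (k + 1) - u k`, and comparing initial values gives
`2 d k = a (k + 1) - 3 a k`. Hence `4 (d k ^ 2 - 2 a k ^ 2 + 1) = Q (a k, a (k + 1)) + 4`, where
`Q x y = x ^ 2 - 6 x y + y ^ 2`. The form `Q` is invariant under the step `(x, y) ↦ (y, 6 y - x)`,
so `Q (a k, a (k + 1)) = Q (1, 5) = -4`.
-/

def SolvesRecurrence {R : Type*} [CommRing R] (t : R) (u : ℕ → R) : Prop :=
  ∀ k, u (k + 2) = t * u (k + 1) - u k

namespace SolvesRecurrence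

variable {R : Type*} [CommRing R] {t : R} {u v : ℕ → R}

theorem ext (hu : SolvesRecurrence t u) (hv : SolvesRecurrence t v)
    (h0 : u 0 = v 0) (h1 : u 1 = v 1) : u = v := by
  funext k
  induction k using Nat.twoStepInduction with
  | zero => exact h0
  | one => exact h1
  | more k ih₀ ih₁ => rw [hu, hv, ih₀, ih₁]

theorem linear_comb (hu : SolvesRecurrence t u) (p q : R) :
    SolvesRecurrence t (fun k => p * u (k + 1) + q * u k) := by
  intro k
  dsimp only
  rw [hu (k + 1), hu k]
  ring

theorem quadForm_eq (hu : SolvesRecurrence t u) (k : ℕ) :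
    u k ^ 2 - t * u k * u (k + 1) + u (k + 1) ^ 2 = u 0 ^ 2 - t * u 0 * u 1 + u 1 ^ 2 := by
  induction k with
  | zero => rfl
  | succ k ih =>
    rw [hu k]
    linear_combination ih

end SolvesRecurrence

theorem stmt_9 (a d : ℕ → ℤ)
    (ha0 : a 0 = 1) (ha1 : a 1 = 5)
    (harec : ∀ k : ℕ, a (k + 2) = 6 * a (k + 1) - a k)
    (hd0 : d 0 = 1) (hd1 : d 1 = 7)
    (hdrec : ∀ k : ℕ, d (k + 2) = 6 * d (k + 1) - d k) :
    ∀ k : ℕ, 2 * (a k) ^ 2 - 1 = (d k) ^ 2 := by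
  have ha : SolvesRecurrence 6 a := harec
  have hd : SolvesRecurrence 6 d := hdrec
  intro k
  have hd_eq : 0 * d (k + 1) + 2 * d k = 1 * a (k + 1) + (-3) * a k :=
    congrFun ((hd.linear_comb 0 2).ext (ha.linear_comb 1 (-3))
      (by simp [ha0, ha1, hd0]) (by simp [ha 0, ha0, ha1, hd1])) k
  have hQ := ha.quadForm_eq k
  rw [ha0, ha1] at hQ
  have h4 : 4 * (2 * a k ^ 2 - 1) = 4 * d k ^ 2 := by
    linear_combination (-1 : ℤ) * hQ - (2 * d k + a (k + 1) - 3 * a k) * hd_eq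
  linarith
end

section
/- Let (aₖ) be defined by a₀ = 1, a₁ = 5, aₖ₊₁ = 6aₖ − aₖ₋₁, let (dₖ) be defined by d₀ = 1, d₁ = 7, dₖ₊₁ = 6dₖ − dₖ₋₁, and set mₖ = (dₖ − 1)/2 (a natural number since dₖ is odd). Then for all k ≥ 0, aₖ² = mₖ² + (mₖ + 1)². In other words, (mₖ, mₖ + 1, aₖ) is a Pythagorean triple whose legs differ by one. -/
/-!
Writing `d k = 2 m k + 1`, the claim is `2 a k ^ 2 - 1 = d k ^ 2`. The companion sequence is
determined by the Mills sequence through `2 d k = a (k + 1) - 3 a k`, so this becomes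
`a (k + 1) ^ 2 - 6 a (k + 1) a k + a k ^ 2 = -4`, and the left-hand side is the quadratic form
that every solution of `u (k + 2) = 6 u (k + 1) - u k` keeps constant.
-/

section Recurrence

variable {R : Type*} [CommRing R] {c : R} {u v : ℕ → R}

theorem recurrence_sq_sub_mul_add_sq_eq (hu : ∀ k, u (k + 2) = c * u (k + 1) - u k) (k : ℕ) :
    u (k + 1) ^ 2 - c * u (k + 1) * u k + u k ^ 2 = u 1 ^ 2 - c * u 1 * u 0 + u 0 ^ 2 := by
  induction k with
  | zero => rfl
  | succ k ih => rw [← ih, hu]; ring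

theorem eq_of_recurrence (hu : ∀ k, u (k + 2) = c * u (k + 1) - u k)
    (hv : ∀ k, v (k + 2) = c * v (k + 1) - v k) (h0 : u 0 = v 0) (h1 : u 1 = v 1) (k : ℕ) :
    u k = v k := by
  induction k using Nat.twoStepInduction with
  | zero => exact h0
  | one => exact h1
  | more k ih₀ ih₁ => rw [hu, hv, ih₀, ih₁]

end Recurrence

theorem two_mul_companion_eq {a d : ℕ → ℤ} (ha0 : a 0 = 1) (ha1 : a 1 = 5)
    (harec : ∀ k : ℕ, a (k + 2) = 6 * a (k + 1) - a k)
    (hd0 : d 0 = 1) (hd1 : d 1 = 7) (hdrec : ∀ k : ℕ, d (k + 2) = 6 * d (k + 1) - d k) (k : ℕ) :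
    2 * d k = a (k + 1) - 3 * a k := by
  refine eq_of_recurrence (c := 6) (u := fun k ↦ 2 * d k) (v := fun k ↦ a (k + 1) - 3 * a k)
    (fun k ↦ ?_) (fun k ↦ ?_) ?_ ?_ k
  · rw [hdrec]; ring
  · rw [harec (k + 1), harec k]; ring
  · rw [hd0, ha0, ha1]; norm_num
  · rw [hd1, harec 0, ha0, ha1]; norm_num

theorem two_mul_sq_sub_one_eq_companion_sq {a d : ℕ → ℤ} (ha0 : a 0 = 1) (ha1 : a 1 = 5)
    (harec : ∀ k : ℕ, a (k + 2) = 6 * a (k + 1) - a k)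
    (hd0 : d 0 = 1) (hd1 : d 1 = 7) (hdrec : ∀ k : ℕ, d (k + 2) = 6 * d (k + 1) - d k) (k : ℕ) :
    2 * a k ^ 2 - 1 = d k ^ 2 := by
  have hform : a (k + 1) ^ 2 - 6 * a (k + 1) * a k + a k ^ 2 = -4 := by
    rw [recurrence_sq_sub_mul_add_sq_eq harec, ha0, ha1]; norm_num
  have hd := two_mul_companion_eq ha0 ha1 harec hd0 hd1 hdrec k
  refine mul_left_cancel₀ (four_ne_zero (α := ℤ)) ?_
  linear_combination -hform - (2 * d k + a (k + 1) - 3 * a k) * hd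

theorem sq_eq_sq_add_succ_sq_of_two_mul_sq_sub_one {x y m : ℤ} (h : 2 * x ^ 2 - 1 = y ^ 2)
    (hm : 2 * m = y - 1) : x ^ 2 = m ^ 2 + (m + 1) ^ 2 := by
  refine mul_left_cancel₀ (four_ne_zero (α := ℤ)) ?_
  linear_combination 2 * h - 2 * (2 * m + y + 1) * hm

theorem stmt_11 (a d m : ℕ → ℤ)
    (ha0 : a 0 = 1) (ha1 : a 1 = 5)
    (harec : ∀ k : ℕ, a (k + 2) = 6 * a (k + 1) - a k)
    (hd0 : d 0 = 1) (hd1 : d 1 = 7)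
    (hdrec : ∀ k : ℕ, d (k + 2) = 6 * d (k + 1) - d k)
    (hm : ∀ k : ℕ, 2 * m k = d k - 1) :
    ∀ k : ℕ, (a k) ^ 2 = (m k) ^ 2 + (m k + 1) ^ 2 := fun k ↦
  sq_eq_sq_add_succ_sq_of_two_mul_sq_sub_one
    (two_mul_sq_sub_one_eq_companion_sq ha0 ha1 harec hd0 hd1 hdrec k) (hm k)
end
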